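/- Let {·,·}′ be the bracket on smooth functions on ℝ⁶ defined by the antisymmetric matrix Π′ with upper entries Π′(x₁,x₂) = −x₃², Π′(x₁,x₃) = x₃x₂, Π′(x₁,J₁) = −x₂J₁, Π′(x₁,J₂) = −x₂J₂, Π′(x₁,J₃) = x₃J₂ − 2x₂J₃, Π′(x₂,x₃) = −x₃x₁, Π′(x₂,J₁) = x₁J₁, Π′(x₂,J₂) = x₁J₂, Π′(x₂,J₃) = 2x₁J₃ − x₃J₁, Π′(x₃,J₁) = 0, Π′(x₃,J₂) = 0, Π′(x₃,J₃) = −x₁J₂ + x₂J₁, Π′(J₁,J₂) = −J₁² − J₂², Π′(J₁,J₃) = −J₃J₂, Π′(J₂,J₃) = J₁J₃. Let C₁ = x₁²+x₂²+x₃² and C₂ = x₁J₁+x₂J₂+x₃J₃. Then {C₁, z}′ = 0 identically on ℝ⁶ for each coordinate function z ∈ {x₁,x₂,x₃,J₁,J₂,J₃}, and {C₂, z}′ = 0 at every point where x₁J₁+x₂J₂+x₃J₃ = 0. In particular Π′ has the same symplectic-leaf foliation as the e*(3) Lie–Poisson structure on the level set C₂ = 0. -/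

import Mathlib

/-- Partial derivative of a function on ℝ⁶ in the `i`-th coordinate direction. -/
noncomputable def pd (i : Fin 6) (f : (Fin 6 → ℝ) → ℝ) (z : Fin 6 → ℝ) : ℝ :=
  fderiv ℝ f z (Pi.single i 1)

/-- The e*(3) Lie–Poisson matrix in coordinates z = (x₁,x₂,x₃,J₁,J₂,J₃). -/
noncomputable def e3Poisson (z : Fin 6 → ℝ) : Matrix (Fin 6) (Fin 6) ℝ :=
  !![0, 0, 0, 0, z 2, -z 1;
     0, 0, 0, -z 2, 0, z 0;
     0, 0, 0, z 1, -z 0, 0;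
     0, z 2, -z 1, 0, z 5, -z 4;
     -z 2, 0, z 0, -z 5, 0, z 4;
     z 1, -z 0, 0, z 4, -z 3, 0]

/-- The second Poisson matrix Π′ of the Goryachev–Chaplygin top in the e*(3)
variables z = (x₁,x₂,x₃,J₁,J₂,J₃). -/
noncomputable def GCP6 (z : Fin 6 → ℝ) : Matrix (Fin 6) (Fin 6) ℝ :=
  !![0, -(z 2) ^ 2, z 2 * z 1, -(z 1 * z 3), -(z 1 * z 4), z 2 * z 4 - 2 * z 1 * z 5;
     (z 2) ^ 2, 0, -(z 2 * z 0), z 0 * z 3, z 0 * z 4, 2 * z 0 * z 5 - z 2 * z 3;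
     -(z 2 * z 1), z 2 * z 0, 0, 0, 0, -(z 0 * z 4) + z 1 * z 3;
     z 1 * z 3, -(z 0 * z 3), 0, 0, -(z 3) ^ 2 - (z 4) ^ 2, -(z 5 * z 4);
     z 1 * z 4, -(z 0 * z 4), 0, (z 3) ^ 2 + (z 4) ^ 2, 0, z 3 * z 5;
     -(z 2 * z 4 - 2 * z 1 * z 5), -(2 * z 0 * z 5 - z 2 * z 3),
       -(-(z 0 * z 4) + z 1 * z 3), z 5 * z 4, -(z 3 * z 5), 0]

/-- The bracket {f,g}′ associated with the matrix Π′ on ℝ⁶. -/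
noncomputable def GCBr6 (f g : (Fin 6 → ℝ) → ℝ) (z : Fin 6 → ℝ) : ℝ :=
  ∑ i : Fin 6, ∑ j : Fin 6, pd i f z * GCP6 z i j * pd j g z

/-! The bracket of `f` with a coordinate function `z_k` is the `k`-th entry of the row vector
`∇f · Π′`. For `C₁` this row vector vanishes identically, while for `C₂` it equals
`C₂ · (x₂, -x₁, 0, J₂, -J₁, 0)`, so it vanishes on the level set `C₂ = 0`. -/

section PartialDerivatives

variable {f g : (Fin 6 → ℝ) → ℝ} {z : Fin 6 → ℝ}

lemma pd_coord (i k : Fin 6) :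
    pd i (fun w => w k) z = Pi.single (M := fun _ => ℝ) i 1 k := by
  rw [pd, (hasFDerivAt_apply k z).fderiv]
  rfl

lemma pd_add (i : Fin 6) (hf : DifferentiableAt ℝ f z) (hg : DifferentiableAt ℝ g z) :
    pd i (fun w => f w + g w) z = pd i f z + pd i g z := by
  simp only [pd, fderiv_fun_add hf hg, add_apply]

lemma pd_mul (i : Fin 6) (hf : DifferentiableAt ℝ f z) (hg : DifferentiableAt ℝ g z) :
    pd i (fun w => f w * g w) z = f z * pd i g z + g z * pd i f z := by
  simp only [pd, fderiv_fun_mul hf hg, add_apply, smul_apply, smul_eq_mul]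

lemma pd_pow (i : Fin 6) (n : ℕ) (hf : DifferentiableAt ℝ f z) :
    pd i (fun w => f w ^ n) z = n * f z ^ (n - 1) * pd i f z := by
  simp only [pd, fderiv_fun_pow n hf, smul_apply, nsmul_eq_mul, smul_eq_mul]

end PartialDerivatives

lemma GCBr6_coord_eq_vecMul (f : (Fin 6 → ℝ) → ℝ) (k : Fin 6) (z : Fin 6 → ℝ) :
    GCBr6 f (fun w => w k) z = Matrix.vecMul (fun i => pd i f z) (GCP6 z) k := by
  simp [GCBr6, pd_coord, Pi.single_apply, Matrix.vecMul, dotProduct]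

lemma pd_sum_sq (z : Fin 6 → ℝ) :
    (fun i => pd i (fun w => (w 0) ^ 2 + (w 1) ^ 2 + (w 2) ^ 2) z) =
      ![2 * z 0, 2 * z 1, 2 * z 2, 0, 0, 0] := by
  ext i
  simp (disch := fun_prop) only [pd_add, pd_pow, pd_coord]
  fin_cases i <;> simp

lemma pd_dot (z : Fin 6 → ℝ) :
    (fun i => pd i (fun w => w 0 * w 3 + w 1 * w 4 + w 2 * w 5) z) =
      ![z 3, z 4, z 5, z 0, z 1, z 2] := by
  ext i
  simp (disch := fun_prop) only [pd_add, pd_mul, pd_coord]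
  fin_cases i <;> simp

lemma vecMul_GCP6_grad_sum_sq (z : Fin 6 → ℝ) :
    Matrix.vecMul ![2 * z 0, 2 * z 1, 2 * z 2, 0, 0, 0] (GCP6 z) = 0 := by
  ext k
  fin_cases k <;>
    simp only [Fin.zero_eta, Fin.mk_one, Fin.reduceFinMk, Matrix.vecMul, dotProduct,
      Fin.sum_univ_six, GCP6, Matrix.of_apply, Matrix.cons_val', Matrix.cons_val,
      Matrix.cons_val_fin_one, Matrix.cons_val_zero, Matrix.cons_val_one, Pi.zero_apply] <;>
    ring

lemma vecMul_GCP6_grad_dot (z : Fin 6 → ℝ) :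
    Matrix.vecMul ![z 3, z 4, z 5, z 0, z 1, z 2] (GCP6 z) =
      (z 0 * z 3 + z 1 * z 4 + z 2 * z 5) • ![z 1, -z 0, 0, z 4, -z 3, 0] := by
  ext k
  fin_cases k <;>
    simp only [Fin.zero_eta, Fin.mk_one, Fin.reduceFinMk, Matrix.vecMul, dotProduct,
      Fin.sum_univ_six, GCP6, Matrix.of_apply, Matrix.cons_val', Matrix.cons_val,
      Matrix.cons_val_fin_one, Matrix.cons_val_zero, Matrix.cons_val_one, Pi.smul_apply,
      smul_eq_mul] <;>
    ring

/-- C₁ = x₁²+x₂²+x₃² is a Casimir of {·,·}′ everywhere, and C₂ = x·J satisfies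
{C₂, z}′ = 0 at every point of the level set C₂ = 0: Π′ has the same
symplectic-leaf foliation as the e*(3) structure on C₂ = 0. -/
theorem GCP6_casimirs :
    (∀ z : Fin 6 → ℝ, ∀ i : Fin 6,
      GCBr6 (fun w => (w 0) ^ 2 + (w 1) ^ 2 + (w 2) ^ 2) (fun w => w i) z = 0) ∧
    (∀ z : Fin 6 → ℝ, z 0 * z 3 + z 1 * z 4 + z 2 * z 5 = 0 →
      ∀ i : Fin 6,
        GCBr6 (fun w => w 0 * w 3 + w 1 * w 4 + w 2 * w 5) (fun w => w i) z = 0) := by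
  refine ⟨fun z i => ?_, fun z hC₂ i => ?_⟩
  · rw [GCBr6_coord_eq_vecMul, pd_sum_sq, vecMul_GCP6_grad_sum_sq, Pi.zero_apply]
  · rw [GCBr6_coord_eq_vecMul, pd_dot, vecMul_GCP6_grad_dot, hC₂, zero_smul, Pi.zero_apply]
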